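/- Let r₀, ñ > 0 be positive reals and z = 1 − θ² + 2iθ ∈ ℂ with θ ∈ ℝ. Define ρ = √(r₀ − z·ñ) with the branch Re ρ > 0 (assuming r₀ − z·ñ is not a nonpositive real). If r₀ > 2ñ and |θ| ≤ 1, then Re ρ ≥ (1/2)·√(r₀). -/
import Mathlib


open Complex

theorem stmt_1 (r₀ n0 θ : ℝ) (hr₀ : 0 < r₀) (hn0 : 0 < n0) (hθ : |θ| ≤ 1)
    (z : ℂ) (hz : z = 1 - (θ : ℂ) ^ 2 + 2 * θ * Complex.I)
    (hnp : ∀ s : ℝ, s ≤ 0 → (r₀ : ℂ) - z * n0 ≠ (s : ℂ))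
    (ρ : ℂ) (hρ : ρ = ((r₀ : ℂ) - z * n0) ^ ((1 : ℂ) / 2))
    (hre : 0 < ρ.re) (hbig : r₀ > 2 * n0) :
    ρ.re ≥ (1 / 2) * Real.sqrt r₀ := by
  have hw0 : (r₀ : ℂ) - z * n0 ≠ 0 := by simpa using hnp 0 le_rfl
  have hsq : ρ ^ 2 = (r₀ : ℂ) - z * n0 := by
    rw [hρ]
    have h := Complex.cpow_nat_inv_pow ((r₀ : ℂ) - z * n0) (by norm_num : (2 : ℕ) ≠ 0)
    simpa [one_div] using h
  have h1 : ρ.re ^ 2 - ρ.im ^ 2 = r₀ - n0 * (1 - θ ^ 2) := by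
    have h := congrArg Complex.re hsq
    rw [hz] at h
    simp [sq, Complex.mul_re, Complex.mul_im, Complex.add_re, Complex.add_im,
      Complex.sub_re, Complex.sub_im] at h
    nlinarith [h]
  have hθ2 : θ ^ 2 ≥ 0 := sq_nonneg θ
  have him : ρ.im ^ 2 ≥ 0 := sq_nonneg _
  have h2 : ρ.re ^ 2 ≥ r₀ / 4 := by nlinarith
  have hs : Real.sqrt r₀ ^ 2 = r₀ := Real.sq_sqrt hr₀.le
  have hsnn : 0 ≤ Real.sqrt r₀ := Real.sqrt_nonneg _
  nlinarith [sq_nonneg (ρ.re - 1 / 2 * Real.sqrt r₀)]
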